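/- Let K ⊆ ℝⁿ be nonempty, closed, convex, f : ℝⁿ → ℝ convex differentiable, h(ξ) = Cξ + d with C of full row rank, and τ > 0. Suppose (ξ*, z*) satisfies ξ* = Π_K(ξ* − τ∇f(ξ*) − τCᵀλ*) and Cξ* + d = 0, where λ* = (CCᵀ)⁻¹(−C∇f(ξ*) − k_p h(ξ*) − k_i z*). Then ξ* is a global minimizer of f over the set K ∩ {ξ : Cξ + d = 0}, provided this set is nonempty and Slater-type regularity holds (the affine constraint intersects the relative interior of K). -/

import Mathlib

/-!
A fixed point `ξ = Π_K(ξ - τ(∇f(ξ) + Cᵀλ))` of the projected update satisfies the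
variational inequality `⟪∇f(ξ) + Cᵀλ, y - ξ⟫ ≥ 0` for all `y ∈ K`. For feasible `y` the multiplier
term vanishes, since `⟪Cᵀλ, y - ξ⟫ = ⟪λ, C(y - ξ)⟫ = 0`, so `⟪∇f(ξ), y - ξ⟫ ≥ 0`, and the gradient
inequality of the convex `f` gives `f ξ ≤ f y`.
-/

open Matrix
open scoped InnerProductSpace

section ConvexGradient

variable {E : Type*} [NormedAddCommGroup E] [NormedSpace ℝ E] {s : Set E} {f : E → ℝ}

theorem ConvexOn.add_fderiv_sub_le (hf : ConvexOn ℝ s f) {x y : E} (hx : x ∈ s) (hy : y ∈ s)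
    {f' : E →L[ℝ] ℝ} (hf' : HasFDerivAt f f' x) : f x + f' (y - x) ≤ f y := by
  set A : ℝ →ᵃ[ℝ] E := AffineMap.lineMap x y
  have hA : ∀ t : ℝ, A t = x + t • (y - x) := fun t => by
    rw [AffineMap.lineMap_apply_module]; module
  have hfA : ConvexOn ℝ (A ⁻¹' s) (f ∘ A) := hf.comp_affineMap A
  have h0 : (0 : ℝ) ∈ A ⁻¹' s := by simpa [A] using hx
  have h1 : (1 : ℝ) ∈ A ⁻¹' s := by simpa [A] using hy
  have hline : HasDerivAt (fun t : ℝ => x + t • (y - x)) (y - x) 0 := by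
    simpa using ((hasDerivAt_id (0 : ℝ)).smul_const (y - x)).const_add x
  have hderiv : HasDerivAt (f ∘ A) (f' (y - x)) 0 := by
    rw [show (A : ℝ → E) = fun t => x + t • (y - x) from funext hA]
    exact (by simpa using hf' : HasFDerivAt f f' (x + (0 : ℝ) • (y - x))).comp_hasDerivAt 0 hline
  have hslope := hfA.le_slope_of_hasDerivAt h0 h1 one_pos hderiv
  simp only [slope_def_field, Function.comp_apply, AffineMap.lineMap_apply_zero,
    AffineMap.lineMap_apply_one, A, sub_zero, div_one] at hslope
  linarith

variable {F : Type*} [NormedAddCommGroup F] [InnerProductSpace ℝ F] [CompleteSpace F]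
  {s : Set F} {f : F → ℝ}

theorem ConvexOn.le_of_hasGradientAt_of_inner_nonneg (hf : ConvexOn ℝ s f) {x y g : F}
    (hx : x ∈ s) (hy : y ∈ s) (hg : HasGradientAt f g x) (hgy : 0 ≤ ⟪g, y - x⟫_ℝ) :
    f x ≤ f y := by
  have := hf.add_fderiv_sub_le hx hy hg.hasFDerivAt
  rw [InnerProductSpace.toDual_apply_apply] at this
  linarith

end ConvexGradient

section Projection

variable {F : Type*} [NormedAddCommGroup F] [InnerProductSpace ℝ F] {K : Set F}

theorem Convex.real_inner_sub_le_zero_of_forall_norm_sub_le (hK : Convex ℝ K) {x p : F}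
    (hp : p ∈ K) (hmin : ∀ y ∈ K, ‖x - p‖ ≤ ‖x - y‖) : ∀ z ∈ K, ⟪x - p, z - p⟫_ℝ ≤ 0 := by
  have : Nonempty K := ⟨⟨p, hp⟩⟩
  refine (norm_eq_iInf_iff_real_inner_le_zero hK hp).mp (le_antisymm ?_ ?_)
  · exact le_ciInf fun z => hmin z z.2
  · exact ciInf_le (f := fun z : K => ‖x - z‖)
      ⟨0, Set.forall_mem_range.2 fun _ => norm_nonneg _⟩ ⟨p, hp⟩

/-- Fixed points of the projected step `p ↦ Π_K(p - τ g)` satisfy the variational inequality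
of `g` on `K`. -/
theorem Convex.real_inner_nonneg_of_forall_norm_sub_smul_le (hK : Convex ℝ K) {p g : F} {τ : ℝ}
    (hτ : 0 < τ) (hp : p ∈ K) (hmin : ∀ y ∈ K, ‖p - τ • g - p‖ ≤ ‖p - τ • g - y‖) :
    ∀ z ∈ K, 0 ≤ ⟪g, z - p⟫_ℝ := by
  intro z hz
  have hvi := hK.real_inner_sub_le_zero_of_forall_norm_sub_le hp hmin z hz
  rw [sub_sub_cancel_left, inner_neg_left, real_inner_smul_left] at hvi
  nlinarith

end Projection

theorem EuclideanSpace.inner_toLp_transpose_mulVec {m n : Type*} [Fintype m] [Fintype n]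
    (A : Matrix m n ℝ) (u : m → ℝ) (v : EuclideanSpace ℝ n) :
    ⟪(WithLp.toLp 2 (Aᵀ *ᵥ u) : EuclideanSpace ℝ n), v⟫_ℝ = u ⬝ᵥ (A *ᵥ v.ofLp) := by
  rw [EuclideanSpace.inner_eq_star_dotProduct, star_trivial, mulVec_transpose, dotProduct_comm,
    dotProduct_mulVec]

theorem projFLCMO_equilibrium_is_minimizer_general (n m : ℕ)
    (K : Set (EuclideanSpace ℝ (Fin n)))
    (hcv : Convex ℝ K)
    (proj : EuclideanSpace ℝ (Fin n) → EuclideanSpace ℝ (Fin n))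
    (hproj : ∀ x, proj x ∈ K ∧ ∀ y ∈ K, ‖x - proj x‖ ≤ ‖x - y‖)
    (f : EuclideanSpace ℝ (Fin n) → ℝ)
    (f' : EuclideanSpace ℝ (Fin n) → EuclideanSpace ℝ (Fin n))
    (hconv : ConvexOn ℝ Set.univ f) (hgrad : ∀ x, HasGradientAt f (f' x) x)
    (C : Matrix (Fin m) (Fin n) ℝ)
    (d : Fin m → ℝ) (τ : ℝ) (hτ : 0 < τ)
    (ξs : EuclideanSpace ℝ (Fin n)) (lams : Fin m → ℝ)
    (hfix : ξs = proj (ξs - τ • f' ξs - τ • (show EuclideanSpace ℝ (Fin n) from WithLp.toLp 2 (Cᵀ.mulVec lams))))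
    (hfeas : C.mulVec ξs + d = 0) :
    ∀ y ∈ K, C.mulVec y + d = 0 → f ξs ≤ f y := by
  intro y hyK hyfeas
  set w : EuclideanSpace ℝ (Fin n) := WithLp.toLp 2 (Cᵀ *ᵥ lams)
  rw [sub_sub, ← smul_add] at hfix
  obtain ⟨hξK, hmin⟩ := hproj (ξs - τ • (f' ξs + w))
  rw [← hfix] at hξK hmin
  have hvi := hcv.real_inner_nonneg_of_forall_norm_sub_smul_le hτ hξK hmin y hyK
  have hw : ⟪w, y - ξs⟫_ℝ = 0 := by
    rw [EuclideanSpace.inner_toLp_transpose_mulVec, WithLp.ofLp_sub, mulVec_sub,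
      show C *ᵥ y.ofLp - C *ᵥ ξs.ofLp = 0 by linear_combination hyfeas - hfeas, dotProduct_zero]
  rw [inner_add_left, hw, add_zero] at hvi
  exact hconv.le_of_hasGradientAt_of_inner_nonneg trivial trivial (hgrad ξs) hvi

/-- Equilibria of the Proj-FL-CMO dynamics are global minimizers: if `(ξ*, z*)` is a
fixed point of the projected update with controlled multiplier `λ*`, and `ξ*` is feasible,
then under Slater-type regularity `ξ*` minimizes the convex `f` over `K ∩ {Cξ + d = 0}`. -/
theorem projFLCMO_equilibrium_is_minimizer (n m : ℕ)
    (K : Set (EuclideanSpace ℝ (Fin n)))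
    (hne : K.Nonempty) (hcl : IsClosed K) (hcv : Convex ℝ K)
    (proj : EuclideanSpace ℝ (Fin n) → EuclideanSpace ℝ (Fin n))
    (hproj : ∀ x, proj x ∈ K ∧ ∀ y ∈ K, ‖x - proj x‖ ≤ ‖x - y‖)
    (f : EuclideanSpace ℝ (Fin n) → ℝ)
    (f' : EuclideanSpace ℝ (Fin n) → EuclideanSpace ℝ (Fin n))
    (hconv : ConvexOn ℝ Set.univ f) (hgrad : ∀ x, HasGradientAt f (f' x) x)
    (C : Matrix (Fin m) (Fin n) ℝ) (hC : LinearIndependent ℝ (fun i => C i))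
    (d : Fin m → ℝ) (kp ki τ : ℝ) (hkp : 0 < kp) (hki : 0 < ki) (hτ : 0 < τ)
    (ξs : EuclideanSpace ℝ (Fin n)) (zs : Fin m → ℝ) (lams : Fin m → ℝ)
    (hlam : lams = (C * Cᵀ)⁻¹.mulVec
      (-(C.mulVec (f' ξs)) - kp • (C.mulVec ξs + d) - ki • zs))
    (hfix : ξs = proj (ξs - τ • f' ξs - τ • (show EuclideanSpace ℝ (Fin n) from WithLp.toLp 2 (Cᵀ.mulVec lams))))
    (hfeas : C.mulVec ξs + d = 0)
    (hslater : ∃ ξ₀, ξ₀ ∈ intrinsicInterior ℝ K ∧ C.mulVec ξ₀ + d = 0) :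
    ∀ y ∈ K, C.mulVec y + d = 0 → f ξs ≤ f y :=
  projFLCMO_equilibrium_is_minimizer_general n m K hcv proj hproj f f' hconv hgrad C d τ hτ ξs lams
    hfix hfeas
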